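/- Let f = a_0 + a_1 z + ... + a_m z^m ∈ ℤ[z] be primitive, and suppose there exist reals 0 < α < β and an index j ∈ {0,...,m} with |a_j| α^j > (β/α)^{m-j} Σ_{i≠j} |a_i| α^i. If there exist natural numbers n, d with β - d ≥ n ≥ α + d such that |f(n)|/d is prime, or is a prime power coprime to |f'(n)|, then f is irreducible in ℤ[z]. -/

import Mathlib

/-!
If the `j`-th term dominates the others as in the hypothesis, it dominates them on the whole
annulus `α ≤ |z| ≤ β`, so `f` has no root there. As `n` lies at distance at least `d` inside
this annulus, every complex root `z` of `f` satisfies `|n - z| > d`, and a nonconstant factor `g`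
of `f` has `|g(n)| = |lc g| ∏ |n - z| > d`, the product running over the roots of `g` and
`|lc g| ≥ 1` being a nonzero integer.

In a factorization `f = g h` into nonconstant factors, `|g(n)| |h(n)| = d p^k` with both factors
exceeding `d` forces `p ∣ g(n)` and `p ∣ h(n)`. For `k = 1` this leaves `|h(n)| ∣ d`, which is
absurd; in general it gives `p ∣ g'(n) h(n) + g(n) h'(n) = f'(n)`, contradicting coprimality.
-/

open Polynomial Finset

lemma Multiset.lt_prod_of_forall_lt {R : Type*} [CommSemiring R] [PartialOrder R]
    [IsStrictOrderedRing R] {s : Multiset R} (hs : s ≠ 0) {d : R} (hd : 1 ≤ d)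
    (h : ∀ x ∈ s, d < x) : d < s.prod := by
  obtain ⟨a, ha⟩ := Multiset.exists_mem_of_ne_zero hs
  obtain ⟨t, rfl⟩ := Multiset.exists_cons_of_mem ha
  have ht : 1 ≤ t.prod :=
    Multiset.one_le_prod fun x hx => hd.trans (h x (Multiset.mem_cons_of_mem hx)).le
  rw [Multiset.prod_cons]
  calc d < a := h a ha
    _ ≤ a * t.prod := le_mul_of_one_le_right (zero_le_one.trans (hd.trans (h a ha).le)) ht

lemma pow_le_pow_mul_pow_sub {s r : ℝ} (hs : 1 ≤ s) (hsr : s ≤ r) {i j m : ℕ} (hi : i ≤ m) :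
    s ^ i ≤ s ^ j * r ^ (m - j) := by
  have hr : 1 ≤ r := hs.trans hsr
  rcases le_total i j with hij | hji
  · calc s ^ i ≤ s ^ j := pow_le_pow_right₀ hs hij
      _ ≤ s ^ j * r ^ (m - j) := le_mul_of_one_le_right (by positivity) (one_le_pow₀ hr)
  · calc s ^ i = s ^ j * s ^ (i - j) := by rw [← pow_add, Nat.add_sub_cancel' hji]
      _ ≤ s ^ j * r ^ (m - j) := by
        refine mul_le_mul_of_nonneg_left ?_ (by positivity)
        calc s ^ (i - j) ≤ r ^ (i - j) := pow_le_pow_left₀ (by positivity) hsr _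
          _ ≤ r ^ (m - j) := pow_le_pow_right₀ hr (by omega)

lemma sum_erase_mul_pow_lt {c : ℕ → ℝ} (hc : ∀ i, 0 ≤ c i) {α β t : ℝ} (hα : 0 < α)
    (hαt : α ≤ t) (htβ : t ≤ β) {m j : ℕ}
    (hdom : (β / α) ^ (m - j) * ∑ i ∈ (range (m + 1)).erase j, c i * α ^ i < c j * α ^ j) :
    ∑ i ∈ (range (m + 1)).erase j, c i * t ^ i < c j * t ^ j := by
  set s := t / α
  have hs : 1 ≤ s := (one_le_div hα).2 hαt
  have hsr : s ≤ β / α := div_le_div_of_nonneg_right htβ hα.le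
  have ht : ∀ i, t ^ i = α ^ i * s ^ i := fun i => by rw [← mul_pow, mul_div_cancel₀ t hα.ne']
  calc ∑ i ∈ (range (m + 1)).erase j, c i * t ^ i
      ≤ ∑ i ∈ (range (m + 1)).erase j, c i * α ^ i * (s ^ j * (β / α) ^ (m - j)) := by
        refine sum_le_sum fun i hi => ?_
        rw [ht, ← mul_assoc]
        have him : i ≤ m := Nat.lt_succ_iff.1 (mem_range.1 (mem_of_mem_erase hi))
        exact mul_le_mul_of_nonneg_left (pow_le_pow_mul_pow_sub hs hsr him)
          (mul_nonneg (hc i) (by positivity))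
    _ = s ^ j * ((β / α) ^ (m - j) * ∑ i ∈ (range (m + 1)).erase j, c i * α ^ i) := by
        rw [← sum_mul]; ring
    _ < s ^ j * (c j * α ^ j) := by gcongr
    _ = c j * t ^ j := by rw [ht]; ring

section NormedField

variable {K : Type*} [NormedField K]

lemma norm_coeff_mul_pow_le_of_isRoot {F : K[X]} {m : ℕ} (hF : F.natDegree ≤ m) {z : K}
    (hz : F.IsRoot z) {j : ℕ} (hj : j ≤ m) :
    ‖F.coeff j‖ * ‖z‖ ^ j ≤ ∑ i ∈ (range (m + 1)).erase j, ‖F.coeff i‖ * ‖z‖ ^ i := by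
  have hsum : F.coeff j * z ^ j + ∑ i ∈ (range (m + 1)).erase j, F.coeff i * z ^ i = 0 := by
    rw [add_sum_erase _ (fun i => F.coeff i * z ^ i) (mem_range.2 (Nat.lt_succ_of_le hj)),
      ← eval_eq_sum_range' (Nat.lt_succ_of_le hF)]
    exact hz
  calc ‖F.coeff j‖ * ‖z‖ ^ j = ‖∑ i ∈ (range (m + 1)).erase j, F.coeff i * z ^ i‖ := by
        rw [← norm_pow, ← norm_mul, eq_neg_of_add_eq_zero_left hsum, norm_neg]
    _ ≤ _ := (norm_sum_le _ _).trans_eq (by simp only [norm_mul, norm_pow])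

lemma norm_lt_or_lt_norm_of_isRoot {F : K[X]} {m : ℕ} (hF : F.natDegree ≤ m) {α β : ℝ}
    (hα : 0 < α) {j : ℕ} (hj : j ≤ m)
    (hdom : (β / α) ^ (m - j) * ∑ i ∈ (range (m + 1)).erase j, ‖F.coeff i‖ * α ^ i <
      ‖F.coeff j‖ * α ^ j)
    {z : K} (hz : F.IsRoot z) : ‖z‖ < α ∨ β < ‖z‖ := by
  by_contra! h
  exact (norm_coeff_mul_pow_le_of_isRoot hF hz hj).not_gt
    (sum_erase_mul_pow_lt (fun _ => norm_nonneg _) hα h.1 h.2 hdom)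

lemma lt_norm_eval_of_lt_norm_sub_roots [IsAlgClosed K] {G : K[X]} (hG : 0 < G.natDegree)
    (hlc : 1 ≤ ‖G.leadingCoeff‖) {x : K} {d : ℝ} (hd : 1 ≤ d)
    (h : ∀ z ∈ G.roots, d < ‖x - z‖) : d < ‖G.eval x‖ := by
  have hroots : G.roots.map (fun z => ‖x - z‖) ≠ 0 := by
    rw [Ne, Multiset.map_eq_zero, ← Multiset.card_eq_zero, IsAlgClosed.card_roots_eq_natDegree]
    exact hG.ne'
  have norm_prod : ∀ s : Multiset K, ‖s.prod‖ = (s.map (‖·‖)).prod :=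
    map_multiset_prod (normHom (α := K))
  rw [(IsAlgClosed.splits G).eval_eq_prod_roots, norm_mul, norm_prod, Multiset.map_map]
  calc d < (G.roots.map fun z => ‖x - z‖).prod :=
        Multiset.lt_prod_of_forall_lt hroots hd (Multiset.forall_mem_map_iff.2 h)
    _ ≤ _ := le_mul_of_one_le_left
        (Multiset.prod_nonneg (Multiset.forall_mem_map_iff.2 fun _ _ => norm_nonneg _)) hlc

end NormedField

lemma lt_norm_sub_of_norm_lt_or_lt_norm {E : Type*} [SeminormedAddCommGroup E] {x z : E}
    {α β d : ℝ} (hxα : α + d ≤ ‖x‖) (hxβ : ‖x‖ ≤ β - d) (hz : ‖z‖ < α ∨ β < ‖z‖) :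
    d < ‖x - z‖ := by
  rcases hz with hz | hz
  · linarith [norm_sub_norm_le x z]
  · linarith [norm_sub_norm_le z x, norm_sub_rev x z]

lemma lt_natAbs_eval_of_dvd {f g : ℤ[X]} (hf : f ≠ 0) (hgf : g ∣ f) (hg : 0 < g.natDegree)
    {x : ℤ} {d : ℕ} (hd : 0 < d)
    (hroots : ∀ z ∈ (f.map (Int.castRingHom ℂ)).roots, (d : ℝ) < ‖(x : ℂ) - z‖) :
    d < (g.eval x).natAbs := by
  have hinj : Function.Injective (Int.castRingHom ℂ) := RingHom.injective_int _
  have hlc : (1 : ℝ) ≤ ‖(g.map (Int.castRingHom ℂ)).leadingCoeff‖ := by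
    rw [leadingCoeff_map_of_injective hinj, eq_intCast, Complex.norm_intCast]
    exact_mod_cast Int.one_le_abs (leadingCoeff_ne_zero.2 (ne_zero_of_dvd_ne_zero hf hgf))
  have hgroots (z) (hz : z ∈ (g.map (Int.castRingHom ℂ)).roots) :
      z ∈ (f.map (Int.castRingHom ℂ)).roots :=
    Multiset.mem_of_le
      (roots.le_of_dvd ((Polynomial.map_ne_zero_iff hinj).2 hf) (map_dvd _ hgf)) hz
  have key := lt_norm_eval_of_lt_norm_sub_roots (by rwa [natDegree_map_eq_of_injective hinj])
    hlc (by exact_mod_cast hd) fun z hz => hroots z (hgroots z hz)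
  rw [eval_intCast_map, eq_intCast, Complex.norm_intCast, ← Int.cast_abs,
    ← Int.natCast_natAbs] at key
  exact_mod_cast key

lemma Polynomial.IsPrimitive.isUnit_of_natDegree_eq_zero {R : Type*} [CommSemiring R]
    {p : R[X]} (hp : p.IsPrimitive) (h : p.natDegree = 0) : IsUnit p := by
  rw [eq_C_of_natDegree_eq_zero h] at hp ⊢
  exact isUnit_C.2 (hp _ dvd_rfl)

lemma Polynomial.IsPrimitive.irreducible_of_not_mul_of_natDegree_pos {R : Type*}
    [CommSemiring R] {p : R[X]} (hp : p.IsPrimitive) (hu : ¬IsUnit p)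
    (h : ∀ a b : R[X], 0 < a.natDegree → 0 < b.natDegree → p ≠ a * b) : Irreducible p := by
  refine ⟨hu, fun a b hab => ?_⟩
  by_contra! hab'
  refine h a b (Nat.pos_of_ne_zero fun ha => hab'.1 ?_)
    (Nat.pos_of_ne_zero fun hb => hab'.2 ?_) hab
  · exact (isPrimitive_of_dvd hp (Dvd.intro _ hab.symm)).isUnit_of_natDegree_eq_zero ha
  · exact (isPrimitive_of_dvd hp (Dvd.intro_left _ hab.symm)).isUnit_of_natDegree_eq_zero hb

lemma dvd_eval_derivative_mul {R : Type*} [CommSemiring R] {a b : R[X]} {x r : R}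
    (ha : r ∣ a.eval x) (hb : r ∣ b.eval x) : r ∣ (derivative (a * b)).eval x := by
  rw [derivative_mul, eval_add, eval_mul, eval_mul]
  exact dvd_add (hb.mul_left _) (ha.mul_right _)

lemma Nat.Prime.dvd_of_mul_eq_mul_pow_of_lt {p k a b d : ℕ} (hp : p.Prime) (hd : 0 < d)
    (h : a * b = d * p ^ k) (ha : d < a) : p ∣ a := by
  by_contra hpa
  have hcop : a.Coprime (p ^ k) := ((Nat.Prime.coprime_iff_not_dvd hp).2 hpa).symm.pow_right k
  exact (Nat.le_of_dvd hd (hcop.dvd_of_dvd_mul_right ⟨b, h.symm⟩)).not_gt ha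

lemma Nat.Prime.mul_ne_mul_of_lt {p a b d : ℕ} (hp : p.Prime) (hd : 0 < d) (ha : d < a)
    (hb : d < b) : a * b ≠ d * p := by
  intro h
  obtain ⟨c, rfl⟩ := hp.dvd_of_mul_eq_mul_pow_of_lt hd (k := 1) (by rwa [pow_one]) ha
  have hcb : c * b = d := Nat.eq_of_mul_eq_mul_left hp.pos (by linarith)
  exact (Nat.le_of_dvd hd (Dvd.intro_left _ hcb)).not_gt hb

open Polynomial in
theorem stmt_14_general (m : ℕ) (f : ℤ[X]) (hdeg : f.natDegree = m) (hprim : f.IsPrimitive)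
    (α β : ℝ) (hα : 0 < α) (j : ℕ) (hj : j ≤ m)
    (hineq : (|f.coeff j| : ℝ) * α ^ j >
      ((β / α) ^ (m - j)) * ∑ i ∈ (Finset.range (m + 1)).erase j, (|f.coeff i| : ℝ) * α ^ i)
    (n d : ℕ) (hd : 0 < d)
    (hnα : (n : ℝ) ≥ α + d) (hnβ : (n : ℝ) ≤ β - d)
    (hdvd : (d : ℤ) ∣ f.eval (n : ℤ))
    (hcond : Nat.Prime ((f.eval (n : ℤ)).natAbs / d) ∨
      ∃ p k : ℕ, p.Prime ∧ 1 ≤ k ∧ (f.eval (n : ℤ)).natAbs / d = p ^ k ∧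
        Nat.Coprime (p ^ k) ((Polynomial.derivative f).eval (n : ℤ)).natAbs) :
    Irreducible f := by
  obtain ⟨c, hc⟩ := hdvd
  have hfn : (f.eval (n : ℤ)).natAbs = d * c.natAbs := by rw [hc, Int.natAbs_mul]; rfl
  rw [hfn, Nat.mul_div_cancel_left _ hd] at hcond
  have hc2 : 2 ≤ c.natAbs := by
    rcases hcond with hp | ⟨p, k, hp, hk, hpk, -⟩
    · exact hp.two_le
    · exact hpk ▸ hp.two_le.trans (Nat.le_self_pow (by omega) p)
  have hroots (z) (hz : z ∈ (f.map (Int.castRingHom ℂ)).roots) :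
      (d : ℝ) < ‖((n : ℤ) : ℂ) - z‖ := by
    refine lt_norm_sub_of_norm_lt_or_lt_norm (by simpa using hnα) (by simpa using hnβ) ?_
    refine norm_lt_or_lt_norm_of_isRoot (natDegree_map_le.trans hdeg.le) hα hj ?_
      (isRoot_of_mem_roots hz)
    simpa [coeff_map] using hineq
  refine hprim.irreducible_of_not_mul_of_natDegree_pos (fun hu => ?_) fun a b ha hb hab => ?_
  · have h1 := Int.isUnit_iff_natAbs_eq.1 (hu.map (evalRingHom (n : ℤ)))
    rw [coe_evalRingHom, hfn] at h1
    have := Nat.eq_one_of_mul_eq_one_left h1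
    omega
  have hA := lt_natAbs_eval_of_dvd hprim.ne_zero (Dvd.intro _ hab.symm) ha hd hroots
  have hB := lt_natAbs_eval_of_dvd hprim.ne_zero (Dvd.intro_left _ hab.symm) hb hd hroots
  have hAB : (a.eval (n : ℤ)).natAbs * (b.eval (n : ℤ)).natAbs = d * c.natAbs := by
    rw [← Int.natAbs_mul, ← eval_mul, ← hab, hfn]
  rcases hcond with hp | ⟨p, k, hp, hk, hpk, hcop⟩
  · exact hp.mul_ne_mul_of_lt hd hA hB hAB
  rw [hpk] at hAB
  have hpa := hp.dvd_of_mul_eq_mul_pow_of_lt hd hAB hA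
  have hpb := hp.dvd_of_mul_eq_mul_pow_of_lt hd ((mul_comm _ _).trans hAB) hB
  have hpf := dvd_eval_derivative_mul (Int.natCast_dvd.2 hpa) (Int.natCast_dvd.2 hpb)
  rw [← hab] at hpf
  exact hp.one_lt.ne' (Nat.eq_one_of_dvd_coprimes hcop (dvd_pow_self p (by omega))
    (Int.natCast_dvd.1 hpf))

open Polynomial in
theorem stmt_14 (m : ℕ) (f : ℤ[X]) (hdeg : f.natDegree = m) (hprim : f.IsPrimitive)
    (α β : ℝ) (hα : 0 < α) (hαβ : α < β) (j : ℕ) (hj : j ≤ m)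
    (hineq : (|f.coeff j| : ℝ) * α ^ j >
      ((β / α) ^ (m - j)) * ∑ i ∈ (Finset.range (m + 1)).erase j, (|f.coeff i| : ℝ) * α ^ i)
    (n d : ℕ) (hn : 0 < n) (hd : 0 < d)
    (hnα : (n : ℝ) ≥ α + d) (hnβ : (n : ℝ) ≤ β - d)
    (hdvd : (d : ℤ) ∣ f.eval (n : ℤ))
    (hcond : Nat.Prime ((f.eval (n : ℤ)).natAbs / d) ∨
      ∃ p k : ℕ, p.Prime ∧ 1 ≤ k ∧ (f.eval (n : ℤ)).natAbs / d = p ^ k ∧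
        Nat.Coprime (p ^ k) ((Polynomial.derivative f).eval (n : ℤ)).natAbs) :
    Irreducible f :=
  stmt_14_general m f hdeg hprim α β hα j hj hineq n d hd hnα hnβ hdvd hcond
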